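/- arXiv:2410.22037 — 13 statements merged into one kernel-verified Lean document; each statement's English description precedes it below -/
import Mathlib

section
/- Let K be a field, let q be a natural number with q ≡ 1 (mod 4), and let x, y ∈ K with y ≠ 0 satisfy the Hermitian equation y^q + y = x^{q+1}. Set ξ = x⁴ and τ = x²/y. Then ξ^{(q−1)/2} + τ^{q−1} = ξ^{(q−1)/4} · τ^q. -/
/-- On the Hermitian curve `y^q + y = x^(q+1)` with `q ≡ 1 (mod 4)`, the invariant
functions `ξ = x⁴` and `τ = x²/y` satisfy the quotient-curve equation
`ξ^((q−1)/2) + τ^(q−1) = ξ^((q−1)/4)·τ^q`. -/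
theorem stmt_1 (K : Type*) [Field K] (q : ℕ) (hq : q % 4 = 1)
    (x y : K) (hy : y ≠ 0) (hxy : y ^ q + y = x ^ (q + 1)) :
    (x ^ 4) ^ ((q - 1) / 2) + (x ^ 2 / y) ^ (q - 1) =
      (x ^ 4) ^ ((q - 1) / 4) * (x ^ 2 / y) ^ q := by
  obtain ⟨k, rfl⟩ : ∃ k, q = 4 * k + 1 := ⟨q / 4, by omega⟩
  have h1 : (4 * k + 1 - 1) / 2 = 2 * k := by omega
  have h2 : (4 * k + 1 - 1) / 4 = k := by omega
  have h3 : 4 * k + 1 - 1 = 4 * k := by omega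
  rw [h1, h2, h3]
  rw [div_pow, div_pow]
  field_simp
  ring_nf
  ring_nf at hxy
  linear_combination (x ^ (8 * k) * y ^ (4 * k)) * hxy
end

section
/- Let K be a field and let q be a natural number with q ≡ 1 (mod 4). If x, y ∈ K satisfy the Hermitian equation y^q + y = x^{q+1}, then ξ := x⁴ and η := x²y satisfy η^q + η · ξ^{(q−1)/2} = ξ^{q−(q−1)/4}. -/
/-- The explicit covering map `(x, y) ↦ (x⁴, x²y)` sends solutions of the Hermitian
equation `y^q + y = x^(q+1)` to solutions of the quotient-curve equation
`η^q + η·ξ^((q−1)/2) = ξ^(q−(q−1)/4)`, where `q ≡ 1 (mod 4)`. -/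
theorem stmt_3 (K : Type*) [Field K] (q : ℕ) (hq : q % 4 = 1)
    (x y : K) (hxy : y ^ q + y = x ^ (q + 1)) :
    (x ^ 2 * y) ^ q + (x ^ 2 * y) * (x ^ 4) ^ ((q - 1) / 2) =
      (x ^ 4) ^ (q - (q - 1) / 4) := by
  obtain ⟨k, rfl⟩ : ∃ k, q = 4 * k + 1 := ⟨q / 4, by omega⟩
  have h1 : (4 * k + 1 - 1) / 2 = 2 * k := by omega
  have h2 : 4 * k + 1 - (4 * k + 1 - 1) / 4 = 3 * k + 1 := by omega
  rw [h1, h2]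
  have key : (x ^ 2 * y) ^ (4 * k + 1) + (x ^ 2 * y) * (x ^ 4) ^ (2 * k) =
      x ^ (8 * k + 2) * (y ^ (4 * k + 1) + y) := by ring
  rw [key, hxy]
  ring
end

section
/- Let K be a field, let q be a natural number with q ≡ 1 (mod 4), and let ξ, τ ∈ K be nonzero elements with ξ^{(q−1)/2} + τ^{q−1} = ξ^{(q−1)/4} · τ^q. Then t := ξ^{(q−1)/2}/τ^{q−1} satisfies ξ^{(q²−1)/4} = t · (t+1)^{q−1}. -/
/-- The birational map to the Garcia–Stichtenoth–Xing model: if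
`ξ^((q−1)/2) + τ^(q−1) = ξ^((q−1)/4)·τ^q` with `ξ, τ ≠ 0`, then
`t = ξ^((q−1)/2)/τ^(q−1)` satisfies `ξ^((q²−1)/4) = t·(t+1)^(q−1)`. -/
theorem stmt_4 (K : Type*) [Field K] (q : ℕ) (hq : q % 4 = 1)
    (ξ τ : K) (hξ : ξ ≠ 0) (hτ : τ ≠ 0)
    (h : ξ ^ ((q - 1) / 2) + τ ^ (q - 1) = ξ ^ ((q - 1) / 4) * τ ^ q) :
    ξ ^ ((q ^ 2 - 1) / 4) =
      (ξ ^ ((q - 1) / 2) / τ ^ (q - 1)) * (ξ ^ ((q - 1) / 2) / τ ^ (q - 1) + 1) ^ (q - 1) := by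
  obtain ⟨m, rfl⟩ : ∃ m, q = 4 * m + 1 := ⟨q / 4, by omega⟩
  have e1 : (4 * m + 1 - 1) / 2 = 2 * m := by omega
  have e2 : (4 * m + 1 - 1) / 4 = m := by omega
  have e3 : 4 * m + 1 - 1 = 4 * m := by omega
  have e4 : ((4 * m + 1) ^ 2 - 1) / 4 = 4 * m ^ 2 + 2 * m := by ring_nf; omega
  rw [e1, e2, e3] at h
  rw [e1, e3, e4]
  have ht1 : ξ ^ (2 * m) / τ ^ (4 * m) + 1 = ξ ^ m * τ := by
    field_simp
    linear_combination h
  rw [ht1]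
  field_simp
  ring_nf
end

section
/- Let K be a field, let q be a natural number with q ≡ 1 (mod 4), and let u ∈ K satisfy u^{(q²−1)/4} = −1; set v = u^{(q+3)/4}. Then for all X, Y ∈ K one has (vY)^q + (vY)(uX)^{(q−1)/2} − (uX)^{q−(q−1)/4} = v^q · (Y^q − Y·X^{(q−1)/2} + X^{q−(q−1)/4}). In particular, the invertible affine substitution (X, Y) ↦ (uX, vY) transforms the curve F₂ : Y^q − YX^{(q−1)/2} + X^{q−(q−1)/4} = 0 into the curve F₁ : Y^q + YX^{(q−1)/2} − X^{q−(q−1)/4} = 0, so F₁ and F₂ are isomorphic over F_{q²}. -/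
/-- Lemma 3.2 (part 1): for `u` with `u^((q²−1)/4) = −1` and `v = u^((q+3)/4)`, the
substitution `(X, Y) ↦ (uX, vY)` transforms `F₂ : Y^q − YX^((q−1)/2) + X^(q−(q−1)/4) = 0`
into `F₁ : Y^q + YX^((q−1)/2) − X^(q−(q−1)/4) = 0`. -/
theorem stmt_5 (K : Type*) [Field K] (q : ℕ) (hq : q % 4 = 1)
    (u : K) (hu : u ^ ((q ^ 2 - 1) / 4) = -1) :
    (∀ X Y : K,
      (u ^ ((q + 3) / 4) * Y) ^ q
        + (u ^ ((q + 3) / 4) * Y) * (u * X) ^ ((q - 1) / 2)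
        - (u * X) ^ (q - (q - 1) / 4) =
      (u ^ ((q + 3) / 4)) ^ q *
        (Y ^ q - Y * X ^ ((q - 1) / 2) + X ^ (q - (q - 1) / 4))) ∧
    ∀ X Y : K,
      Y ^ q - Y * X ^ ((q - 1) / 2) + X ^ (q - (q - 1) / 4) = 0 →
      (u ^ ((q + 3) / 4) * Y) ^ q
        + (u ^ ((q + 3) / 4) * Y) * (u * X) ^ ((q - 1) / 2)
        - (u * X) ^ (q - (q - 1) / 4) = 0 := by
  obtain ⟨k, rfl⟩ : ∃ k, q = 4 * k + 1 := ⟨q / 4, by omega⟩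
  have e1 : (4 * k + 1 + 3) / 4 = k + 1 := by omega
  have e2 : (4 * k + 1 - 1) / 2 = 2 * k := by omega
  have e3 : 4 * k + 1 - (4 * k + 1 - 1) / 4 = 3 * k + 1 := by omega
  have e4 : ((4 * k + 1) ^ 2 - 1) / 4 = 4 * k ^ 2 + 2 * k := by
    have : (4 * k + 1) ^ 2 = 4 * (4 * k ^ 2 + 2 * k) + 1 := by ring
    omega
  rw [e4] at hu
  rw [e1, e2, e3]
  have key : (u ^ (k + 1)) ^ (4 * k + 1) = -(u ^ (3 * k + 1)) := by
    rw [← pow_mul]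
    have : (k + 1) * (4 * k + 1) = (3 * k + 1) + (4 * k ^ 2 + 2 * k) := by ring
    rw [this, pow_add, hu, mul_neg_one]
  have main : ∀ X Y : K,
      (u ^ (k + 1) * Y) ^ (4 * k + 1)
        + (u ^ (k + 1) * Y) * (u * X) ^ (2 * k)
        - (u * X) ^ (3 * k + 1) =
      (u ^ (k + 1)) ^ (4 * k + 1) *
        (Y ^ (4 * k + 1) - Y * X ^ (2 * k) + X ^ (3 * k + 1)) := by
    intro X Y
    have h2 : (u ^ (k + 1)) * u ^ (2 * k) = u ^ (3 * k + 1) := by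
      rw [← pow_add]; congr 1; ring
    rw [mul_pow, mul_pow, mul_pow, key]
    linear_combination (Y * X ^ (2 * k)) * h2
  exact ⟨main, fun X Y h => by rw [main X Y, h, mul_zero]⟩
end

section
/- Let K be a field, let q be a natural number with q ≡ 1 (mod 4), let w ∈ K be nonzero and suppose ε := w^{(q²−1)/4} satisfies ε² = −1; set v = w^{(q+3)/4}. Then for all X, Y ∈ K one has (vY)^q + (vY)(wX)^{(q−1)/2} − (wX)^{q−(q−1)/4} = v^q · (Y^q − ε·Y·X^{(q−1)/2} + ε·X^{q−(q−1)/4}). Consequently the substitution (X, Y) ↦ (wX, vY) gives an F_{q²}-isomorphism from the curve Y^q − εYX^{(q−1)/2} + εX^{q−(q−1)/4} = 0 to the curve F₁ : Y^q + YX^{(q−1)/2} − X^{q−(q−1)/4} = 0. -/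
/-- Lemma 3.2 (part 2): for `w ≠ 0` with `ε = w^((q²−1)/4)` satisfying `ε² = −1` and
`v = w^((q+3)/4)`, the substitution `(X, Y) ↦ (wX, vY)` gives an isomorphism from the
curve `Y^q − εYX^((q−1)/2) + εX^(q−(q−1)/4) = 0` to `F₁ : Y^q + YX^((q−1)/2) − X^(q−(q−1)/4) = 0`. -/
theorem stmt_6 (K : Type*) [Field K] (q : ℕ) (hq : q % 4 = 1)
    (w : K) (hw : w ≠ 0) (hε : (w ^ ((q ^ 2 - 1) / 4)) ^ 2 = -1) :
    (∀ X Y : K,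
      (w ^ ((q + 3) / 4) * Y) ^ q
        + (w ^ ((q + 3) / 4) * Y) * (w * X) ^ ((q - 1) / 2)
        - (w * X) ^ (q - (q - 1) / 4) =
      (w ^ ((q + 3) / 4)) ^ q *
        (Y ^ q - w ^ ((q ^ 2 - 1) / 4) * Y * X ^ ((q - 1) / 2)
          + w ^ ((q ^ 2 - 1) / 4) * X ^ (q - (q - 1) / 4))) ∧
    ∀ X Y : K,
      Y ^ q - w ^ ((q ^ 2 - 1) / 4) * Y * X ^ ((q - 1) / 2)
        + w ^ ((q ^ 2 - 1) / 4) * X ^ (q - (q - 1) / 4) = 0 →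
      (w ^ ((q + 3) / 4) * Y) ^ q
        + (w ^ ((q + 3) / 4) * Y) * (w * X) ^ ((q - 1) / 2)
        - (w * X) ^ (q - (q - 1) / 4) = 0 := by
  obtain ⟨k, rfl⟩ : ∃ k, q = 4 * k + 1 := ⟨q / 4, by omega⟩
  have hsq : (4 * k + 1) ^ 2 = 16 * k ^ 2 + 8 * k + 1 := by ring
  have hm : k * (4 * k + 2) = 4 * k ^ 2 + 2 * k := by ring
  have e1 : ((4 * k + 1) ^ 2 - 1) / 4 = k * (4 * k + 2) := by omega
  have e2 : (4 * k + 1 + 3) / 4 = k + 1 := by omega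
  have e3 : (4 * k + 1 - 1) / 2 = 2 * k := by omega
  have e4 : 4 * k + 1 - (4 * k + 1 - 1) / 4 = 3 * k + 1 := by omega
  rw [e1] at hε
  rw [e1, e2, e3, e4]
  have hkey : w ^ (3 * k + 1) = -(w ^ (k * (4 * k + 2)) * (w ^ (k + 1)) ^ (4 * k + 1)) := by
    have h4 : (w ^ (k * (4 * k + 2))) ^ 2 * (w ^ (k * (4 * k + 2))) ^ 2 = 1 := by
      rw [hε]; ring
    calc w ^ (3 * k + 1)
        = (w ^ (k * (4 * k + 2))) ^ 2 * (w ^ (k * (4 * k + 2))) ^ 2 * w ^ (3 * k + 1) := by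
          rw [h4, one_mul]
      _ = (w ^ (k * (4 * k + 2))) ^ 2 * (w ^ (k * (4 * k + 2)) * w ^ ((k + 1) * (4 * k + 1))) := by
          rw [← pow_mul, ← pow_add, ← pow_add, ← pow_add, ← pow_add]
          congr 1
          ring
      _ = -(w ^ (k * (4 * k + 2)) * (w ^ (k + 1)) ^ (4 * k + 1)) := by
          rw [hε, ← pow_mul]; ring
  have main : ∀ X Y : K,
      (w ^ (k + 1) * Y) ^ (4 * k + 1)
        + (w ^ (k + 1) * Y) * (w * X) ^ (2 * k)
        - (w * X) ^ (3 * k + 1) =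
      (w ^ (k + 1)) ^ (4 * k + 1) *
        (Y ^ (4 * k + 1) - w ^ (k * (4 * k + 2)) * Y * X ^ (2 * k)
          + w ^ (k * (4 * k + 2)) * X ^ (3 * k + 1)) := by
    intro X Y
    have h2 : w ^ (k + 1) * w ^ (2 * k) = w ^ (3 * k + 1) := by
      rw [← pow_add]; ring_nf
    calc (w ^ (k + 1) * Y) ^ (4 * k + 1)
          + (w ^ (k + 1) * Y) * (w * X) ^ (2 * k)
          - (w * X) ^ (3 * k + 1)
        = (w ^ (k + 1)) ^ (4 * k + 1) * Y ^ (4 * k + 1)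
            + (w ^ (k + 1) * w ^ (2 * k)) * (Y * X ^ (2 * k))
            - w ^ (3 * k + 1) * X ^ (3 * k + 1) := by
          rw [mul_pow, mul_pow, mul_pow]; ring
      _ = (w ^ (k + 1)) ^ (4 * k + 1) * Y ^ (4 * k + 1)
            + w ^ (3 * k + 1) * (Y * X ^ (2 * k))
            - w ^ (3 * k + 1) * X ^ (3 * k + 1) := by rw [h2]
      _ = _ := by rw [hkey]; ring
  exact ⟨main, fun X Y h => by rw [main X Y, h, mul_zero]⟩
end

section
/- Let K be a commutative ring, let q be a natural number with q ≡ 1 (mod 4), and let θ ∈ K satisfy θ^{(q²−1)/4} = 1; set ζ = θ^{(q+3)/4}. If ξ, η ∈ K satisfy η^q + η·ξ^{(q−1)/2} = ξ^{q−(q−1)/4}, then (ζη)^q + (ζη)·(θξ)^{(q−1)/2} = (θξ)^{q−(q−1)/4}. That is, Ψ : (ξ, η) ↦ (θξ, θ^{(q+3)/4}η) is an automorphism of the curve 𝓕 defined over F_{q²}. -/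
/-- Lemma 3.3: for `θ` with `θ^((q²−1)/4) = 1` and `ζ = θ^((q+3)/4)`, the map
`Ψ : (ξ, η) ↦ (θξ, ζη)` preserves the equation `η^q + η·ξ^((q−1)/2) = ξ^(q−(q−1)/4)`
of the curve 𝓕. -/
theorem stmt_7 (K : Type*) [CommRing K] (q : ℕ) (hq : q % 4 = 1)
    (θ : K) (hθ : θ ^ ((q ^ 2 - 1) / 4) = 1)
    (ξ η : K) (h : η ^ q + η * ξ ^ ((q - 1) / 2) = ξ ^ (q - (q - 1) / 4)) :
    (θ ^ ((q + 3) / 4) * η) ^ q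
      + (θ ^ ((q + 3) / 4) * η) * (θ * ξ) ^ ((q - 1) / 2) =
    (θ * ξ) ^ (q - (q - 1) / 4) := by
  obtain ⟨k, rfl⟩ : ∃ k, q = 4 * k + 1 := ⟨q / 4, by omega⟩
  have e1 : (4 * k + 1 + 3) / 4 = k + 1 := by omega
  have e2 : (4 * k + 1 - 1) / 2 = 2 * k := by omega
  have e3 : 4 * k + 1 - (4 * k + 1 - 1) / 4 = 3 * k + 1 := by omega
  have e4 : ((4 * k + 1) ^ 2 - 1) / 4 = 4 * k ^ 2 + 2 * k := by ring_nf; omega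
  rw [e2, e3] at h; rw [e1, e2, e3]
  rw [e4] at hθ
  have key : θ ^ ((k + 1) * (4 * k + 1)) = θ ^ (3 * k + 1) := by
    have : (k + 1) * (4 * k + 1) = (4 * k ^ 2 + 2 * k) + (3 * k + 1) := by ring
    rw [this, pow_add, hθ, one_mul]
  calc (θ ^ (k + 1) * η) ^ (4 * k + 1)
        + (θ ^ (k + 1) * η) * (θ * ξ) ^ (2 * k)
      = θ ^ ((k + 1) * (4 * k + 1)) * η ^ (4 * k + 1)
        + θ ^ (3 * k + 1) * (η * ξ ^ (2 * k)) := by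
        rw [mul_pow, ← pow_mul]; ring
    _ = θ ^ (3 * k + 1) * (η ^ (4 * k + 1) + η * ξ ^ (2 * k)) := by
        rw [key]; ring
    _ = (θ * ξ) ^ (3 * k + 1) := by rw [h, mul_pow]
end

section
/- Let K be a field, let q be a natural number with q ≡ 1 (mod 4), and let ξ, η ∈ K be nonzero elements satisfying η^q + η·ξ^{(q−1)/2} = ξ^{q−(q−1)/4}. Then ξ' := ξ³/η⁴ and η' := ξ²/η³ also satisfy η'^q + η'·ξ'^{(q−1)/2} = ξ'^{q−(q−1)/4}. That is, the involution Θ : (ξ, η) ↦ (ξ³/η⁴, ξ²/η³) is an automorphism of the curve 𝓕 defined over F_{q²}. -/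
/-- Lemma 3.4: the involution `Θ : (ξ, η) ↦ (ξ³/η⁴, ξ²/η³)` is an automorphism of the
curve 𝓕 of equation `η^q + η·ξ^((q−1)/2) = ξ^(q−(q−1)/4)`. -/
theorem stmt_9 (K : Type*) [Field K] (q : ℕ) (hq : q % 4 = 1)
    (ξ η : K) (hξ : ξ ≠ 0) (hη : η ≠ 0)
    (h : η ^ q + η * ξ ^ ((q - 1) / 2) = ξ ^ (q - (q - 1) / 4)) :
    (ξ ^ 2 / η ^ 3) ^ q
      + (ξ ^ 2 / η ^ 3) * (ξ ^ 3 / η ^ 4) ^ ((q - 1) / 2) =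
    (ξ ^ 3 / η ^ 4) ^ (q - (q - 1) / 4) := by
  obtain ⟨k, rfl⟩ : ∃ k, q = 4 * k + 1 := ⟨q / 4, by omega⟩
  have e1 : (4 * k + 1 - 1) / 2 = 2 * k := by omega
  have e2 : 4 * k + 1 - (4 * k + 1 - 1) / 4 = 3 * k + 1 := by omega
  rw [e1, e2] at h ⊢
  have hη4 : η ^ (4 * k + 1) ≠ 0 := pow_ne_zero _ hη
  simp only [div_pow]
  field_simp
  ring_nf
  ring_nf at h
  linear_combination (ξ ^ 2 * ξ ^ (k * 6) * η ^ 6 * η ^ (k * 20)) * h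
end

section
/- Let K be a commutative ring, let q be a natural number with q ≡ 1 (mod 4), and let θ ∈ K satisfy θ^{(q²−1)/4} = 1. In the ring of 5×5 matrices over K, let M_Ψ be the diagonal matrix diag(1, θ, θ^{(q+3)/4}, θ^{(q+1)/2}, θ^{q+1}) and let M_Θ be the permutation matrix that exchanges the 0th and 4th basis vectors and fixes the 1st, 2nd and 3rd. Then M_Θ · M_Ψ · M_Θ · (M_Ψ)^q = θ^{q+1} · I₅, where I₅ is the identity matrix. (Projectively this says Θ Ψ Θ = Ψ^{−q}.) -/
/-- The relation `ΘΨΘ = Ψ^(−q)` in the linear action on PG(4, F_{q²}): with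
`M_Ψ = diag(1, θ, θ^((q+3)/4), θ^((q+1)/2), θ^(q+1))` and `M_Θ` the permutation matrix
exchanging the 0th and 4th coordinates, one has `M_Θ·M_Ψ·M_Θ·M_Ψ^q = θ^(q+1)·I₅`. -/
theorem stmt_10 (K : Type*) [CommRing K] (q : ℕ) (hq : q % 4 = 1)
    (θ : K) (hθ : θ ^ ((q ^ 2 - 1) / 4) = 1) :
    (Matrix.of fun i j : Fin 5 => if Equiv.swap (0 : Fin 5) 4 i = j then (1 : K) else 0)
      * Matrix.diagonal ![1, θ, θ ^ ((q + 3) / 4), θ ^ ((q + 1) / 2), θ ^ (q + 1)]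
      * (Matrix.of fun i j : Fin 5 => if Equiv.swap (0 : Fin 5) 4 i = j then (1 : K) else 0)
      * (Matrix.diagonal ![1, θ, θ ^ ((q + 3) / 4), θ ^ ((q + 1) / 2), θ ^ (q + 1)]) ^ q
      = θ ^ (q + 1) • (1 : Matrix (Fin 5) (Fin 5) K) := by
  obtain ⟨k, rfl⟩ : ∃ k, q = 4 * k + 1 := ⟨q / 4, by omega⟩
  set q := 4 * k + 1 with hqdef
  have h1 : θ ^ (4 * k ^ 2 + 2 * k) = 1 := by
    have : (q ^ 2 - 1) / 4 = 4 * k ^ 2 + 2 * k := by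
      have : q ^ 2 = 16 * k ^ 2 + 8 * k + 1 := by ring
      omega
    rwa [this] at hθ
  have h2 : θ ^ (8 * k ^ 2 + 4 * k) = 1 := by
    rw [show 8 * k ^ 2 + 4 * k = (4 * k ^ 2 + 2 * k) + (4 * k ^ 2 + 2 * k) by ring, pow_add, h1,
      one_mul]
  have h4 : θ ^ (16 * k ^ 2 + 8 * k) = 1 := by
    rw [show 16 * k ^ 2 + 8 * k = (8 * k ^ 2 + 4 * k) + (8 * k ^ 2 + 4 * k) by ring, pow_add, h2,
      one_mul]
  set v : Fin 5 → K := ![1, θ, θ ^ ((q + 3) / 4), θ ^ ((q + 1) / 2), θ ^ (q + 1)] with hv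
  set P : Matrix (Fin 5) (Fin 5) K :=
    Matrix.of fun i j : Fin 5 => if Equiv.swap (0 : Fin 5) 4 i = j then (1 : K) else 0 with hP
  have key : P * Matrix.diagonal v * P = Matrix.diagonal (v ∘ Equiv.swap 0 4) := by
    ext i j
    fin_cases i <;> fin_cases j <;>
      simp [hP, Matrix.mul_apply, Fin.sum_univ_five, Matrix.diagonal, Equiv.swap_apply_def, hv]
  have e1 : (q + 3) / 4 = k + 1 := by omega
  have e2 : (q + 1) / 2 = 2 * k + 1 := by omega
  have e3 : q + 1 = 4 * k + 2 := by omega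
  have fe : (fun i => (v ∘ Equiv.swap (0 : Fin 5) 4) i * (v ^ q) i) = fun _ => θ ^ (q + 1) := by
    funext i
    fin_cases i <;>
      simp [hv, e1, e2, e3, Equiv.swap_apply_def, hqdef, Pi.pow_apply, ← pow_mul, ← pow_add]
    · rw [← pow_succ', show 4 * k + 1 + 1 = 4 * k + 2 from rfl]
    · rw [show (4 * k + 1 + 3) / 4 = k + 1 by omega, show k + 1 + (k + 1) * (4 * k + 1) = (4 * k ^ 2 + 2 * k) + (4 * k + 2) by ring,
        pow_add, h1, one_mul]
    · rw [show (4 * k + 1 + 1) / 2 = 2 * k + 1 by omega, show 2 * k + 1 + (2 * k + 1) * (4 * k + 1) =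
          (8 * k ^ 2 + 4 * k) + (4 * k + 2) by ring, pow_add, h2, one_mul]
    · rw [show (4 * k + 2) * (4 * k + 1) =
          (16 * k ^ 2 + 8 * k) + (4 * k + 2) by ring, pow_add, h4, one_mul]
  rw [key, Matrix.diagonal_pow, Matrix.diagonal_mul_diagonal, Matrix.smul_one_eq_diagonal]
  exact congrArg Matrix.diagonal fe
end

section
/- Let K be a field, let q be a natural number with q ≡ 1 (mod 4), and let a, b ∈ K satisfy b^q + b·a^{(q−1)/2} = a^{q−(q−1)/4}. Then the point (X₀ : X₁ : X₂ : X₃ : X₄) = (a² : a³ : a²b : ab² : b⁴) satisfies the Hermitian equation −X₁^{q+1} + 4X₂^{q+1} − 2X₃^{q+1} + X₀X₄^q + X₀^qX₄ = 0, i.e. −a^{3q+3} + 4a^{2q+2}b^{q+1} − 2a^{q+1}b^{2q+2} + a²b^{4q} + a^{2q}b⁴ = 0, as well as the two quadric equations X₃² = X₀X₄ and X₂² = X₁X₃. -/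
/-- Theorem 5.5: the image `(a² : a³ : a²b : ab² : b⁴)` of an affine point `(a, b)` of the
curve `η^q + η·ξ^((q−1)/2) = ξ^(q−(q−1)/4)` lies on the Hermitian variety
`−X₁^(q+1) + 4X₂^(q+1) − 2X₃^(q+1) + X₀X₄^q + X₀^qX₄ = 0` and on the quadrics
`X₃² = X₀X₄` and `X₂² = X₁X₃`. -/
theorem stmt_13 (K : Type*) [Field K] (q : ℕ) (hq : q % 4 = 1)
    (a b : K) (hab : b ^ q + b * a ^ ((q - 1) / 2) = a ^ (q - (q - 1) / 4)) :
    (-(a ^ 3) ^ (q + 1) + 4 * (a ^ 2 * b) ^ (q + 1) - 2 * (a * b ^ 2) ^ (q + 1)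
        + a ^ 2 * (b ^ 4) ^ q + (a ^ 2) ^ q * b ^ 4 = 0) ∧
    (a * b ^ 2) ^ 2 = a ^ 2 * b ^ 4 ∧
    (a ^ 2 * b) ^ 2 = a ^ 3 * (a * b ^ 2) := by
  obtain ⟨k, rfl⟩ : ∃ k, q = 4 * k + 1 := ⟨q / 4, by omega⟩
  have h2 : (4 * k + 1 - 1) / 2 = 2 * k := by omega
  have h4 : 4 * k + 1 - (4 * k + 1 - 1) / 4 = 3 * k + 1 := by omega
  rw [h2, h4] at hab
  refine ⟨?_, by ring, by ring⟩
  have hc : b ^ (4 * k + 1) = a ^ (3 * k + 1) - b * a ^ (2 * k) := by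
    linear_combination hab
  have key : -(a ^ 3) ^ (4 * k + 1 + 1) + 4 * (a ^ 2 * b) ^ (4 * k + 1 + 1)
      - 2 * (a * b ^ 2) ^ (4 * k + 1 + 1) + a ^ 2 * (b ^ 4) ^ (4 * k + 1)
      + (a ^ 2) ^ (4 * k + 1) * b ^ 4 =
      -((a ^ k) ^ 12 * a ^ 6) + 4 * ((a ^ k) ^ 8 * a ^ 4 * (b ^ (4 * k + 1) * b))
      - 2 * ((a ^ k) ^ 4 * a ^ 2 * (b ^ (4 * k + 1)) ^ 2 * b ^ 2)
      + a ^ 2 * (b ^ (4 * k + 1)) ^ 4 + (a ^ k) ^ 8 * a ^ 2 * b ^ 4 := by ring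
  rw [key, hc]
  ring
end

section
/- Let K be a field, let q be a natural number with q ≡ 1 (mod 4), let θ ∈ K be nonzero with ζ := θ^{(q+3)/4}, and let ξ ∈ K be nonzero and η ∈ K. Then (ζη)²/(θξ) = θ^{(q+1)/2}·(η²/ξ) and ((ζη)²/(θξ))² = θ^{q+1}·(η²/ξ)². That is, under the embedding ρ(ξ, η) = (1 : ξ : η : η²/ξ : (η²/ξ)²) into PG(4), the map Ψ : (ξ, η) ↦ (θξ, θ^{(q+3)/4}η) acts as the diagonal linear collineation (X₀ : X₁ : X₂ : X₃ : X₄) ↦ (X₀ : θX₁ : θ^{(q+3)/4}X₂ : θ^{(q+1)/2}X₃ : θ^{q+1}X₄). -/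
/-- Proposition 5.8: under the embedding `ρ(ξ, η) = (1 : ξ : η : η²/ξ : (η²/ξ)²)`, the
automorphism `Ψ : (ξ, η) ↦ (θξ, θ^((q+3)/4)η)` acts as the diagonal collineation
`(X₀ : X₁ : X₂ : X₃ : X₄) ↦ (X₀ : θX₁ : θ^((q+3)/4)X₂ : θ^((q+1)/2)X₃ : θ^(q+1)X₄)`. -/
theorem stmt_15 (K : Type*) [Field K] (q : ℕ) (hq : q % 4 = 1)
    (θ : K) (hθ : θ ≠ 0) (ξ : K) (hξ : ξ ≠ 0) (η : K) :
    (θ ^ ((q + 3) / 4) * η) ^ 2 / (θ * ξ) = θ ^ ((q + 1) / 2) * (η ^ 2 / ξ) ∧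
    ((θ ^ ((q + 3) / 4) * η) ^ 2 / (θ * ξ)) ^ 2 = θ ^ (q + 1) * (η ^ 2 / ξ) ^ 2 := by
  obtain ⟨k, rfl⟩ : ∃ k, q = 4 * k + 1 := ⟨q / 4, by omega⟩
  have h1 : (4 * k + 1 + 3) / 4 = k + 1 := by omega
  have h2 : (4 * k + 1 + 1) / 2 = 2 * k + 1 := by omega
  rw [h1, h2]
  constructor
  · field_simp
    ring
  · field_simp
    ring
end

section
/- Let K be a finite field with exactly q² elements, where q is an odd prime power with q ≡ 1 (mod 4). Then the set {c ∈ K : c^{(q−1)/2} = −1} has exactly (q−1)/2 elements, and for any c, d ∈ K with c^{(q−1)/2} = −1 and d^{(q−1)/2} = −1 there exists θ ∈ K with θ^{(q²−1)/4} = 1 and d·θ^{(q+1)/2} = c. -/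
/-- Transitivity claim of Proposition 5.9: in `K = F_{q²}` (q an odd prime power,
`q ≡ 1 (mod 4)`), the set `{c : c^((q−1)/2) = −1}` has exactly `(q−1)/2` elements, and
for any two such elements `c, d` there is `θ` with `θ^((q²−1)/4) = 1` and
`d·θ^((q+1)/2) = c`. -/
theorem stmt_16 (K : Type*) [Field K] [Fintype K] (q p h : ℕ)
    (hp : p.Prime) (hq : q = p ^ h) (hmod : q % 4 = 1)
    (hcard : Fintype.card K = q ^ 2) :
    {c : K | c ^ ((q - 1) / 2) = -1}.ncard = (q - 1) / 2 ∧
    ∀ c d : K, c ^ ((q - 1) / 2) = -1 → d ^ ((q - 1) / 2) = -1 →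
      ∃ θ : K, θ ^ ((q ^ 2 - 1) / 4) = 1 ∧ d * θ ^ ((q + 1) / 2) = c := by
  classical
  -- basic numerology
  have hq1 : q ≠ 1 := by
    intro h1
    have := Fintype.one_lt_card (α := K)
    rw [hcard, h1] at this
    norm_num at this
  have hq5 : 5 ≤ q := by omega
  set n : ℕ := (q - 1) / 2 with hn
  have hqn : q = 2 * n + 1 := by omega
  have hn2 : 2 ≤ n := by omega
  have hN : q ^ 2 - 1 = 4 * (n * (n + 1)) := by
    have : (2 * n + 1) ^ 2 = 4 * (n * (n + 1)) + 1 := by ring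
    rw [hqn]; omega
  have hq14 : (q ^ 2 - 1) / 4 = n * (n + 1) := by omega
  have hq12 : (q + 1) / 2 = n + 1 := by omega
  -- char ≠ 2, so -1 ≠ 1
  have hchar : ringChar K ≠ 2 := by
    intro h2
    have := FiniteField.even_card_of_char_two (F := K) h2
    rw [hcard] at this
    have hqodd : q % 2 = 1 := by omega
    have hq2 : q ^ 2 % 2 = 1 := by rw [Nat.pow_mod, hqodd]
    omega
  have hne : (-1 : K) ≠ 1 := Ring.neg_one_ne_one_of_char_ne_two hchar
  have hsq : ∀ x : K, x ^ 2 = 1 → x ≠ 1 → x = -1 := by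
    intro x hx2 hx1
    have : (x - 1) * (x + 1) = 0 := by linear_combination hx2
    rcases mul_eq_zero.mp this with h' | h'
    · exact absurd (sub_eq_zero.mp h') hx1
    · exact eq_neg_of_add_eq_zero_left h'
  -- generator of Kˣ
  obtain ⟨g, hg⟩ := IsCyclic.exists_ofOrder_eq_natCard (α := Kˣ)
  have hgo : orderOf g = 4 * (n * (n + 1)) := by
    rw [hg, Nat.card_eq_fintype_card, Fintype.card_units, hcard, hN]
  -- the element c0 with c0 ^ n = -1
  set c0 : K := ((g ^ (2 * (n + 1)) : Kˣ) : K) with hc0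
  have hc0n : c0 ^ n = -1 := by
    have hx2 : (c0 ^ n) ^ 2 = 1 := by
      have : ((g ^ (2 * (n + 1))) ^ n) ^ 2 = 1 := by
        simp only [← pow_mul]
        exact orderOf_dvd_iff_pow_eq_one.mp (by rw [hgo]; exact ⟨1, by ring⟩)
      calc (c0 ^ n) ^ 2 = (((g ^ (2 * (n + 1))) ^ n) ^ 2 : Kˣ) := by push_cast [hc0]; ring
        _ = 1 := by rw [this]; rfl
    have hx1 : c0 ^ n ≠ 1 := by
      intro h1
      have h1' : ((g ^ (2 * (n + 1))) ^ n : Kˣ) = 1 := by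
        apply Units.ext; push_cast; rw [← h1, hc0]; push_cast; ring
      rw [← pow_mul] at h1'
      have hdvd := orderOf_dvd_of_pow_eq_one h1'
      rw [hgo] at hdvd
      have hle := Nat.le_of_dvd (by positivity) hdvd
      nlinarith
    exact hsq _ hx2 hx1
  have hc0ne : c0 ≠ 0 := by
    intro h0
    rw [h0, zero_pow (by omega)] at hc0n
    exact absurd hc0n.symm (by simp)
  -- the element z of order n
  set z : K := ((g ^ (4 * (n + 1)) : Kˣ) : K) with hz
  have hzo : orderOf z = n := by
    rw [hz, orderOf_units, orderOf_pow, hgo]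
    have hdvd : 4 * (n + 1) ∣ 4 * (n * (n + 1)) := ⟨n, by ring⟩
    rw [Nat.gcd_eq_right hdvd]
    have : 4 * (n * (n + 1)) = n * (4 * (n + 1)) := by ring
    rw [this, Nat.mul_div_cancel _ (by positivity)]
  have hzn : z ^ n = 1 := by rw [← hzo, pow_orderOf_eq_one]
  -- counting
  set Tf : Finset K := Finset.univ.filter (fun x => x ^ n = 1) with hTf
  set Sf : Finset K := Finset.univ.filter (fun x => x ^ n = -1) with hSf
  have hTcard : Tf.card = n := by
    apply le_antisymm
    · have hsub : Tf ⊆ (Polynomial.nthRoots n (1 : K)).toFinset := by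
        intro x hx
        rw [Multiset.mem_toFinset, Polynomial.mem_nthRoots (by omega)]
        simpa [hTf] using hx
      calc Tf.card ≤ _ := Finset.card_le_card hsub
        _ ≤ Multiset.card (Polynomial.nthRoots n (1 : K)) := Multiset.toFinset_card_le _
        _ ≤ n := Polynomial.card_nthRoots n 1
    · have hsub : (Finset.range n).image (z ^ ·) ⊆ Tf := by
        intro x hx
        obtain ⟨k, _, rfl⟩ := Finset.mem_image.mp hx
        simp only [hTf, Finset.mem_filter, Finset.mem_univ, true_and]
        rw [← pow_mul, mul_comm, pow_mul, hzn, one_pow]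
      calc n = ((Finset.range n).image (z ^ ·)).card := by
              rw [Finset.card_image_of_injOn (by
                intro a ha b hb hab
                exact pow_injOn_Iio_orderOf (x := z)
                  (by simpa [hzo] using Finset.mem_range.mp ha)
                  (by simpa [hzo] using Finset.mem_range.mp hb) hab),
                Finset.card_range]
        _ ≤ Tf.card := Finset.card_le_card hsub
  have hST : Sf = Tf.image (fun t => c0 * t) := by
    ext x
    simp only [hSf, hTf, Finset.mem_filter, Finset.mem_univ, true_and, Finset.mem_image]
    constructor
    · intro hx
      refine ⟨x / c0, ?_, by field_simp⟩
      rw [div_pow, hx, hc0n, neg_div_neg_eq, div_one]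
    · rintro ⟨t, ht, rfl⟩
      rw [mul_pow, hc0n, ht, mul_one]
  have hScard : Sf.card = n := by
    rw [hST, Finset.card_image_of_injective _ (mul_right_injective₀ hc0ne), hTcard]
  constructor
  · have hset : {c : K | c ^ n = -1} = (Sf : Set K) := by
      ext x; simp [hSf]
    rw [hset, Set.ncard_coe_finset, hScard]
  · intro c d hc hd
    have hd0 : d ≠ 0 := by
      intro h0
      rw [h0, zero_pow (by omega)] at hd
      exact absurd hd.symm (by simp)
    refine ⟨c / d, ?_, ?_⟩
    · rw [hq14, pow_mul, div_pow, hc, hd, neg_div_neg_eq, div_one, one_pow]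
    · have hθn : (c / d) ^ n = 1 := by
        rw [div_pow, hc, hd, neg_div_neg_eq, div_one]
      rw [hq12, pow_succ, hθn, one_mul]
      field_simp
end

section
/- Let K be a field of characteristic p > 0, let q = p^h with q ≡ 1 (mod 4), and let μ ∈ K with μ ≠ 0 and μ^q = μ. Suppose a, b ∈ K satisfy a ≠ 0, b = μ·a^{(q+3)/4}, and b^q + b·a^{(q−1)/2} = a^{q−(q−1)/4}. Then μ·a^{(q²−1)/4} = 1 − μ. In particular: if μ = 1/4 then a^{(q²−1)/4} = 3; if μ = 3/8 then a^{(q²−1)/4} = 5/3; if μ = 1/2 then a^{(q²−1)/4} = 1; and μ = 1 is impossible (it would force a = 0). -/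
/-- Section 6 of the paper: if `(a, b)` is an affine point of the curve
`η^q + η·ξ^((q−1)/2) = ξ^(q−(q−1)/4)` with `a ≠ 0` and `b = μ·a^((q+3)/4)` for some
`μ ∈ F_q \ {0}`, then `μ·a^((q²−1)/4) = 1 − μ`; in particular `μ = 1/4, 3/8, 1/2` force
`a^((q²−1)/4) = 3, 5/3, 1` respectively, and `μ = 1` is impossible. -/
theorem stmt_17 (K : Type*) [Field K] (p : ℕ) [hp : Fact p.Prime] [CharP K p]
    (h q : ℕ) (hq : q = p ^ h) (hmod : q % 4 = 1)
    (μ : K) (hμ0 : μ ≠ 0) (hμq : μ ^ q = μ)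
    (a b : K) (ha : a ≠ 0) (hb : b = μ * a ^ ((q + 3) / 4))
    (hab : b ^ q + b * a ^ ((q - 1) / 2) = a ^ (q - (q - 1) / 4)) :
    μ * a ^ ((q ^ 2 - 1) / 4) = 1 - μ ∧
    (μ = 1 / 4 → a ^ ((q ^ 2 - 1) / 4) = 3) ∧
    (μ = 3 / 8 → a ^ ((q ^ 2 - 1) / 4) = 5 / 3) ∧
    (μ = 1 / 2 → a ^ ((q ^ 2 - 1) / 4) = 1) ∧
    μ ≠ 1 := by
  obtain ⟨k, hk⟩ : ∃ k, q = 4 * k + 1 := ⟨q / 4, by omega⟩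
  have e1 : (q + 3) / 4 = k + 1 := by omega
  have e2 : (q - 1) / 2 = 2 * k := by omega
  have e3 : q - (q - 1) / 4 = 3 * k + 1 := by omega
  have e4 : (q ^ 2 - 1) / 4 = 4 * k ^ 2 + 2 * k := by
    have : q ^ 2 = 16 * k ^ 2 + 8 * k + 1 := by rw [hk]; ring
    omega
  rw [e1] at hb
  rw [e2, e3] at hab
  subst hb
  have h1 : (μ * a ^ (k + 1)) ^ q = μ * a ^ ((k + 1) * q) := by
    rw [mul_pow, ← pow_mul, hμq]
  have h2 : (k + 1) * q = (3 * k + 1) + (4 * k ^ 2 + 2 * k) := by rw [hk]; ring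
  rw [h1, h2, pow_add] at hab
  have hE : μ * a ^ (4 * k ^ 2 + 2 * k) = 1 - μ := by
    have hne : a ^ (3 * k + 1) ≠ 0 := pow_ne_zero _ ha
    have : a ^ (3 * k + 1) * (μ * a ^ (4 * k ^ 2 + 2 * k) + μ)
        = a ^ (3 * k + 1) * 1 := by
      linear_combination hab
    have := mul_left_cancel₀ hne this
    linear_combination this
  rw [e4]
  refine ⟨hE, ?_, ?_, ?_, ?_⟩
  · intro hμ
    rw [hμ] at hE hμ0
    have h4 : (4 : K) ≠ 0 := by
      intro h0; apply hμ0; rw [one_div, h0, inv_zero]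
    field_simp at hE
    linear_combination hE
  · intro hμ
    rw [hμ] at hE hμ0
    have h8 : (8 : K) ≠ 0 := by
      intro h0; apply hμ0; rw [h0, div_zero]
    have h3 : (3 : K) ≠ 0 := by
      intro h0; apply hμ0; rw [h0, zero_div]
    field_simp at hE ⊢
    linear_combination hE
  · intro hμ
    rw [hμ] at hE hμ0
    have h2 : (2 : K) ≠ 0 := by
      intro h0; apply hμ0; rw [one_div, h0, inv_zero]
    field_simp at hE
    linear_combination hE
  · intro hμ
    rw [hμ] at hE
    simp only [one_mul, sub_self] at hE
    exact pow_ne_zero _ ha hE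
end

section
/- Let K be a field of characteristic p > 2, let q = p^h with q ≡ 1 (mod 4), and let c ∈ K satisfy c^{(q−1)/2} = −1. Then there exists a formal power series ξ ∈ K⟦t⟧ of t-adic order 2, with the coefficient of t² equal to c, satisfying t^q + t·ξ^{(q−1)/2} = ξ^{q−(q−1)/4}. -/
open Polynomial PowerSeries

/-- Newton/Hensel lemma for `K⟦X⟧`: a polynomial with a simple approximate root `1`
has an exact root with constant coefficient `1`. -/
lemma newton_aux {K : Type*} [Field K] (F : Polynomial (PowerSeries K))
    (hF1 : (PowerSeries.X : PowerSeries K) ∣ F.eval 1)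
    (hF' : ∀ g : PowerSeries K, PowerSeries.constantCoeff (R := K) g = 1 →
        PowerSeries.constantCoeff (R := K) (F.derivative.eval g) ≠ 0) :
    ∃ g : PowerSeries K, PowerSeries.constantCoeff (R := K) g = 1 ∧ F.eval g = 0 := by
  classical
  -- Newton iteration
  let f : ℕ → PowerSeries K := fun k =>
    Nat.rec 1 (fun _ g => g - F.eval g * (F.derivative.eval g)⁻¹) k
  have hf0 : f 0 = 1 := rfl
  have hfs : ∀ k, f (k + 1) = f k - F.eval (f k) * (F.derivative.eval (f k))⁻¹ := fun k => rfl
  -- basic invariant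
  have key : ∀ k, PowerSeries.constantCoeff (R := K) (f k) = 1 ∧
      (PowerSeries.X : PowerSeries K) ^ (k + 1) ∣ F.eval (f k) := by
    intro k
    induction k with
    | zero => exact ⟨by simp [hf0], by simpa [hf0] using hF1⟩
    | succ k ih =>
      obtain ⟨h1, hdvd⟩ := ih
      set g := f k with hg
      have hXdvd : (PowerSeries.X : PowerSeries K) ∣ F.eval g :=
        dvd_trans (dvd_pow_self _ (Nat.succ_ne_zero k)) hdvd
      have hcF : PowerSeries.constantCoeff (R := K) (F.eval g) = 0 := by
        obtain ⟨b, hb⟩ := hXdvd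
        simp [hb]
      have hu : PowerSeries.constantCoeff (R := K) (F.derivative.eval g) ≠ 0 := hF' g h1
      have huu : (F.derivative.eval g) * (F.derivative.eval g)⁻¹ = 1 :=
        PowerSeries.mul_inv_cancel _ hu
      set y : PowerSeries K := -(F.eval g * (F.derivative.eval g)⁻¹) with hy
      have hfy : f (k + 1) = g + y := by rw [hfs]; ring
      constructor
      · rw [hfy]
        simp [hy, h1, hcF]
      · obtain ⟨z, hz⟩ := F.binomExpansion g y
        rw [hfy, hz]
        have h2 : F.derivative.eval g * y = -F.eval g := by
          rw [hy]
          calc F.derivative.eval g * -(F.eval g * (F.derivative.eval g)⁻¹)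
              = -(F.eval g * (F.derivative.eval g * (F.derivative.eval g)⁻¹)) := by ring
            _ = -F.eval g := by rw [huu, mul_one]
        rw [h2]
        have hXy : (PowerSeries.X : PowerSeries K) ^ (k + 1) ∣ y := by
          rw [hy]; exact dvd_neg.2 (Dvd.dvd.mul_right hdvd _)
        have : (PowerSeries.X : PowerSeries K) ^ (k + 2) ∣ z * y ^ 2 := by
          have h2' : (PowerSeries.X : PowerSeries K) ^ ((k + 1) * 2) ∣ y ^ 2 := by
            rw [pow_mul]
            exact pow_dvd_pow_of_dvd hXy 2
          exact dvd_trans (pow_dvd_pow _ (by omega)) (h2'.mul_left z)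
        simpa using this
  -- coefficient stabilization
  have hdiff : ∀ k, (PowerSeries.X : PowerSeries K) ^ (k + 1) ∣ f (k + 1) - f k := by
    intro k
    rw [hfs]
    have := (key k).2
    simpa using dvd_neg.2 (this.mul_right (F.derivative.eval (f k))⁻¹)
  have stab : ∀ n j, n < j → PowerSeries.coeff (R := K) n (f j) = PowerSeries.coeff (R := K) n (f (n + 1)) := by
    intro n j hnj
    induction j with
    | zero => omega
    | succ j ih =>
      rcases Nat.lt_or_ge n j with hlt | hge
      · have h0 : PowerSeries.coeff (R := K) n (f (j + 1) - f j) = 0 :=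
          PowerSeries.X_pow_dvd_iff.1 (hdiff j) n (by omega)
        rw [map_sub] at h0
        have : PowerSeries.coeff (R := K) n (f (j + 1)) = PowerSeries.coeff (R := K) n (f j) :=
          sub_eq_zero.1 h0
        rw [this]; exact ih hlt
      · have : n = j := by omega
        subst this; rfl
  -- the limit
  set g : PowerSeries K := PowerSeries.mk (fun n => PowerSeries.coeff (R := K) n (f (n + 1))) with hgdef
  have hgk : ∀ k, (PowerSeries.X : PowerSeries K) ^ k ∣ g - f k := by
    intro k
    rw [PowerSeries.X_pow_dvd_iff]
    intro n hn
    rw [map_sub, hgdef, PowerSeries.coeff_mk, stab n k hn, sub_self]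
  refine ⟨g, ?_, ?_⟩
  · have h01 : PowerSeries.coeff (R := K) 0 g = PowerSeries.coeff (R := K) 0 (f (0 + 1)) := by
      rw [hgdef, PowerSeries.coeff_mk]
    rw [← PowerSeries.coeff_zero_eq_constantCoeff_apply, h01,
      PowerSeries.coeff_zero_eq_constantCoeff_apply]
    exact (key 1).1
  · ext n
    have h1 : (PowerSeries.X : PowerSeries K) ^ (n + 1) ∣ F.eval g - F.eval (f (n + 1)) :=
      dvd_trans (hgk (n + 1)) (Polynomial.sub_dvd_eval_sub _ _ F)
    have h2 := (key (n + 1)).2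
    have h3 : (PowerSeries.X : PowerSeries K) ^ (n + 1) ∣ F.eval g := by
      have := dvd_add h1 (dvd_trans (pow_dvd_pow _ (by omega)) h2)
      simpa using this
    have := PowerSeries.X_pow_dvd_iff.1 h3 n (by omega)
    simpa using this

/-- Lemma 4.1 (branches tangent to the η-axis): for each `c` with `c^((q−1)/2) = −1`
there is a formal power series `ξ ∈ K⟦t⟧` of `t`-adic order `2`, with coefficient of `t²`
equal to `c`, satisfying `t^q + t·ξ^((q−1)/2) = ξ^(q−(q−1)/4)`. -/
theorem stmt_19 (K : Type*) [Field K] (p : ℕ) [hp : Fact p.Prime] [CharP K p]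
    (hp2 : 2 < p) (h q : ℕ) (hq : q = p ^ h) (hmod : q % 4 = 1)
    (c : K) (hc : c ^ ((q - 1) / 2) = -1) :
    ∃ ξ : PowerSeries K,
      ξ.order = (2 : ℕ) ∧ PowerSeries.coeff (R := K) 2 ξ = c ∧
      PowerSeries.X ^ q + PowerSeries.X * ξ ^ ((q - 1) / 2) =
        ξ ^ (q - (q - 1) / 4) := by
  classical
  have h2K : (2 : K) ≠ 0 := by
    intro h2
    have hpd : p ∣ 2 := (CharP.cast_eq_zero_iff K p 2).1 (by exact_mod_cast h2)
    exact absurd (Nat.le_of_dvd (by norm_num) hpd) (by omega)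
  have hh : h ≠ 0 := by
    rintro rfl
    rw [pow_zero] at hq
    subst hq
    norm_num at hc
    exact h2K (by linear_combination hc)
  have hpq : p ≤ q := hq ▸ Nat.le_self_pow hh p
  have hq5 : 5 ≤ q := by omega
  set m : ℕ := (q - 1) / 4 with hmdef
  have hqm : q = 4 * m + 1 := by omega
  have hm1 : 1 ≤ m := by omega
  have e2 : (q - 1) / 2 = 2 * m := by omega
  have e3 : q - (q - 1) / 4 = 3 * m + 1 := by omega
  rw [e2] at hc
  -- (2m : K) ≠ 0
  have hqK : ((q : ℕ) : K) = 0 := by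
    rw [hq]; push_cast; rw [CharP.cast_eq_zero K p]; exact zero_pow hh
  have h2m : ((2 * m : ℕ) : K) ≠ 0 := by
    intro h0
    rw [hqm] at hqK
    push_cast at hqK h0
    exact one_ne_zero (α := K) (by linear_combination hqK - 2 * h0)
  -- Newton's method for `f^{2m} + c^{3m+1} X^{2m+1} f^{3m+1} - 1 = 0`
  set c'' : PowerSeries K := PowerSeries.C (R := K) (c ^ (3 * m + 1)) * PowerSeries.X ^ (2 * m + 1)
    with hc''def
  set F : Polynomial (PowerSeries K) :=
    Polynomial.X ^ (2 * m) + Polynomial.C c'' * Polynomial.X ^ (3 * m + 1) - 1 with hFdef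
  have hF1 : (PowerSeries.X : PowerSeries K) ∣ F.eval 1 := by
    have : F.eval 1 = c'' := by simp [hFdef]
    rw [this, hc''def]
    exact Dvd.dvd.mul_left (dvd_pow_self _ (by omega)) _
  have hFder : F.derivative = Polynomial.C ((2 * m : ℕ) : PowerSeries K)
      * Polynomial.X ^ (2 * m - 1)
      + Polynomial.C (c'' * ((3 * m + 1 : ℕ) : PowerSeries K)) * Polynomial.X ^ (3 * m) := by
    simp [hFdef, Polynomial.derivative_X_pow]
    ring
  have hF' : ∀ g : PowerSeries K, PowerSeries.constantCoeff (R := K) g = 1 →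
      PowerSeries.constantCoeff (R := K) (F.derivative.eval g) ≠ 0 := by
    intro g hg
    have hval : PowerSeries.constantCoeff (R := K) (F.derivative.eval g) = ((2 * m : ℕ) : K) := by
      rw [hFder]
      simp [hc''def, hg, zero_pow (by omega : 2 * m + 1 ≠ 0)]
      exact Or.inl (map_ofNat _ 2)
    rw [hval]; exact h2m
  obtain ⟨g, hg1, hg0⟩ := newton_aux F hF1 hF'
  have hE : g ^ (2 * m)
      + (PowerSeries.C (R := K) (c ^ (3 * m + 1)) * PowerSeries.X ^ (2 * m + 1)) * g ^ (3 * m + 1)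
      - 1 = 0 := by
    simpa [hFdef, hc''def] using hg0
  have hcne : c ≠ 0 := by
    intro h0
    rw [h0, zero_pow (by omega : 2 * m ≠ 0)] at hc
    exact one_ne_zero (α := K) (by linear_combination hc)
  refine ⟨PowerSeries.C (R := K) c * PowerSeries.X ^ 2 * g, ?_, ?_, ?_⟩
  · -- order = 2
    have hXdvd : (PowerSeries.X : PowerSeries K) ^ 2
        ∣ PowerSeries.C (R := K) c * PowerSeries.X ^ 2 * g := ⟨PowerSeries.C (R := K) c * g, by ring⟩
    have hco2 : PowerSeries.coeff (R := K) 2 (PowerSeries.C (R := K) c * PowerSeries.X ^ 2 * g) = c := by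
      have hrw : PowerSeries.C (R := K) c * PowerSeries.X ^ 2 * g
          = (PowerSeries.C (R := K) c * g) * PowerSeries.X ^ 2 := by ring
      rw [hrw, show (2 : ℕ) = 0 + 2 from rfl, PowerSeries.coeff_mul_X_pow]
      simp [hg1]
    rw [PowerSeries.order_eq_nat]
    exact ⟨by rw [hco2]; exact hcne, fun i hi => PowerSeries.X_pow_dvd_iff.1 hXdvd i hi⟩
  · -- coeff 2 = c
    have hrw : PowerSeries.C (R := K) c * PowerSeries.X ^ 2 * g
        = (PowerSeries.C (R := K) c * g) * PowerSeries.X ^ 2 := by ring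
    rw [hrw, show (2 : ℕ) = 0 + 2 from rfl, PowerSeries.coeff_mul_X_pow]
    simp [hg1]
  · -- the equation
    rw [e2, e3, hqm]
    have hc2m : (PowerSeries.C (R := K) c) ^ (2 * m) = -1 := by
      rw [← map_pow, hc]; simp
    have e4 : (PowerSeries.C (R := K) c * PowerSeries.X ^ 2 * g) ^ (2 * m)
        = -(PowerSeries.X ^ (4 * m) * g ^ (2 * m)) := by
      rw [mul_pow, mul_pow, hc2m, ← pow_mul, show 2 * (2 * m) = 4 * m by ring]
      ring
    have e5 : (PowerSeries.C (R := K) c * PowerSeries.X ^ 2 * g) ^ (3 * m + 1)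
        = PowerSeries.C (R := K) (c ^ (3 * m + 1)) * (PowerSeries.X ^ (6 * m + 2) * g ^ (3 * m + 1)) := by
      rw [mul_pow, mul_pow, ← map_pow, ← pow_mul, show 2 * (3 * m + 1) = 6 * m + 2 by ring]
      ring
    rw [e4, e5]
    linear_combination (-(PowerSeries.X ^ (4 * m + 1) : PowerSeries K)) * hE
end
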